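/- Let 0 < s < 1, p ≥ q ≥ 1, δ > 0, −d < β < sp, and let Φ = Φ_{d,s,p} be the spherical kernel. Then the integral ∫_0^∞ |1 − t^{−δ}|^p t^{d+β−1} Φ(t) dt is finite, provided q/p − q(1−s) < 1 (which holds automatically since q ≤ p and s < 1). -/
import Mathlib


open MeasureTheory Set
open scoped ENNReal

noncomputable section

/-- The angular kernel `Φ_{d,s,p}`. -/
def Phi (d : ℕ) (s p t : ℝ) : ℝ :=
  if d = 1 then (1 - t) ^ (-1 - s * p) + (1 + t) ^ (-1 - s * p)
  else (2 * Real.pi ^ (((d : ℝ) - 1) / 2) / Real.Gamma (((d : ℝ) - 1) / 2)) *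
    ∫ r in (-1 : ℝ)..1,
      (1 - r ^ 2) ^ (((d : ℝ) - 3) / 2) * (1 - 2 * t * r + t ^ 2) ^ (-((d : ℝ) + s * p) / 2)


/-- Integrability of `(1-r)^c (1+r)^e` on `(-1,1)` for `c, e > -1`. -/
lemma aux_int {c e : ℝ} (hc : -1 < c) (he : -1 < e) :
    IntegrableOn (fun r : ℝ => (1 - r) ^ c * (1 + r) ^ e) (Ioo (-1 : ℝ) 1) := by
  have h1 : IntervalIntegrable (fun x : ℝ => x ^ c) volume 0 2 :=
    intervalIntegral.intervalIntegrable_rpow' hc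
  have h1' : IntervalIntegrable (fun x : ℝ => (1 - x) ^ c) volume (-1) 1 := by
    have := (h1.comp_sub_left 1).symm
    norm_num at this
    exact this
  have h2 : IntervalIntegrable (fun x : ℝ => x ^ e) volume 0 2 :=
    intervalIntegral.intervalIntegrable_rpow' he
  have h2' : IntervalIntegrable (fun x : ℝ => (1 + x) ^ e) volume (-1) 1 := by
    have := h2.comp_add_left 1
    norm_num at this
    exact this
  have hc1 : IntegrableOn (fun x : ℝ => (1 - x) ^ c) (Ioo (-1 : ℝ) 1) := by
    have := (intervalIntegrable_iff_integrableOn_Ioo_of_le (by norm_num : (-1:ℝ) ≤ 1)).mp h1'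
    exact this
  have hc2 : IntegrableOn (fun x : ℝ => (1 + x) ^ e) (Ioo (-1 : ℝ) 1) := by
    exact (intervalIntegrable_iff_integrableOn_Ioo_of_le (by norm_num : (-1:ℝ) ≤ 1)).mp h2'
  -- split at 0
  have hmeas1 : Measurable (fun x : ℝ => (1 - x) ^ c) := (measurable_const.sub measurable_id).pow_const _
  have hmeas2 : Measurable (fun x : ℝ => (1 + x) ^ e) := (measurable_const.add measurable_id).pow_const _
  have hL : IntegrableOn (fun r : ℝ => (1 - r) ^ c * (1 + r) ^ e) (Ioo (-1 : ℝ) 0) := by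
    refine Integrable.bdd_mul (c := max 1 (2 ^ c)) (hc2.mono_set (Ioo_subset_Ioo le_rfl (by norm_num))) hmeas1.aestronglyMeasurable ?_
    filter_upwards [ae_restrict_mem measurableSet_Ioo] with x hx
    rw [Real.norm_eq_abs, abs_of_nonneg (Real.rpow_nonneg (by linarith [hx.2]) _)]
    rcases le_or_gt 0 c with h | h
    · exact le_max_of_le_right (Real.rpow_le_rpow (by linarith [hx.2]) (by linarith [hx.1]) h)
    · exact le_max_of_le_left (Real.rpow_le_one_of_one_le_of_nonpos (by linarith [hx.2]) h.le)
  have hR : IntegrableOn (fun r : ℝ => (1 - r) ^ c * (1 + r) ^ e) (Ico (0 : ℝ) 1) := by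
    have : IntegrableOn (fun r : ℝ => (1 + r) ^ e * (1 - r) ^ c) (Ico (0 : ℝ) 1) := by
      refine Integrable.bdd_mul (c := max 1 (2 ^ e)) (hc1.mono_set (by intro x hx; exact ⟨by linarith [hx.1], hx.2⟩)) hmeas2.aestronglyMeasurable ?_
      filter_upwards [ae_restrict_mem measurableSet_Ico] with x hx
      rw [Real.norm_eq_abs, abs_of_nonneg (Real.rpow_nonneg (by linarith [hx.1]) _)]
      rcases le_or_gt 0 e with h | h
      · exact le_max_of_le_right (Real.rpow_le_rpow (by linarith [hx.1]) (by linarith [hx.2]) h)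
      · exact le_max_of_le_left (Real.rpow_le_one_of_one_le_of_nonpos (by linarith [hx.1]) h.le)
    simpa [mul_comm] using this
  have hsub : Ioo (-1 : ℝ) 1 ⊆ Ioo (-1 : ℝ) 0 ∪ Ico (0 : ℝ) 1 := by
    intro x hx
    rcases lt_or_ge x 0 with h | h
    · exact Or.inl ⟨hx.1, h⟩
    · exact Or.inr ⟨h, hx.2⟩
  exact (hL.union hR).mono_set hsub

lemma inner_bound {K e μ θ t : ℝ} (hK : 0 < K) (he : -1 < e) (hc : -1 < e - μ)
    (hμ : 0 ≤ μ) (hμK : μ = (1 - θ) * K / 2) (hθ0 : 0 ≤ θ) (hθ1 : θ ≤ 1)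
    (ht : 0 < t) (ht1 : t ≠ 1) :
    (∫ r in (-1 : ℝ)..1, (1 - r ^ 2) ^ e * (1 - 2 * t * r + t ^ 2) ^ (-K / 2))
      ≤ (|1 - t| ^ (-(θ * K)) * (2 * t) ^ (-μ)) *
        ∫ r in Ioo (-1 : ℝ) 1, (1 - r) ^ (e - μ) * (1 + r) ^ e := by
  have h1t : (0 : ℝ) < |1 - t| := by
    rw [abs_pos]; exact sub_ne_zero.mpr (Ne.symm ht1)
  have habs : |1 - t| ^ (2 : ℝ) = (1 - t) ^ 2 := by
    rw [show ((2 : ℝ)) = ((2 : ℕ) : ℝ) by norm_num, Real.rpow_natCast, sq_abs]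
  have hx : (0 : ℝ) < |1 - t| ^ (2 : ℝ) := Real.rpow_pos_of_pos h1t _
  have hM : 0 ≤ |1 - t| ^ (-(θ * K)) * (2 * t) ^ (-μ) :=
    mul_nonneg (Real.rpow_nonneg (abs_nonneg _) _) (Real.rpow_nonneg (by linarith) _)
  have hg0 : IntegrableOn (fun r : ℝ => (1 - r) ^ (e - μ) * (1 + r) ^ e) (Ioo (-1 : ℝ) 1) :=
    aux_int hc he
  have bound : ∀ r ∈ Ioo (-1 : ℝ) 1,
      (1 - r ^ 2) ^ e * (1 - 2 * t * r + t ^ 2) ^ (-K / 2)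
        ≤ (|1 - t| ^ (-(θ * K)) * (2 * t) ^ (-μ)) * ((1 - r) ^ (e - μ) * (1 + r) ^ e) := by
    intro r hr
    have hr1 : (0 : ℝ) < 1 - r := by linarith [hr.2]
    have hr2 : (0 : ℝ) < 1 + r := by linarith [hr.1]
    have hy : (0 : ℝ) < 2 * t * (1 - r) := by positivity
    have hq_eq : 1 - 2 * t * r + t ^ 2 = |1 - t| ^ (2 : ℝ) + 2 * t * (1 - r) := by
      rw [habs]; ring
    have hgm : (|1 - t| ^ (2 : ℝ)) ^ θ * (2 * t * (1 - r)) ^ (1 - θ)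
        ≤ |1 - t| ^ (2 : ℝ) + 2 * t * (1 - r) := by
      have h := Real.geom_mean_le_arith_mean2_weighted hθ0 (by linarith : (0:ℝ) ≤ 1 - θ)
        hx.le hy.le (by ring)
      nlinarith [mul_nonneg (sub_nonneg.mpr hθ1) hx.le, mul_nonneg hθ0 hy.le]
    have hgmpos : 0 < (|1 - t| ^ (2 : ℝ)) ^ θ * (2 * t * (1 - r)) ^ (1 - θ) :=
      mul_pos (Real.rpow_pos_of_pos hx _) (Real.rpow_pos_of_pos hy _)
    have hstep : (1 - 2 * t * r + t ^ 2) ^ (-K / 2)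
        ≤ ((|1 - t| ^ (2 : ℝ)) ^ θ * (2 * t * (1 - r)) ^ (1 - θ)) ^ (-K / 2) := by
      rw [hq_eq]
      exact Real.rpow_le_rpow_of_nonpos hgmpos hgm (by linarith : -K / 2 ≤ 0)
    have key : (1 - r ^ 2) ^ e * (1 - 2 * t * r + t ^ 2) ^ (-K / 2)
        ≤ (1 - r ^ 2) ^ e * ((|1 - t| ^ (2 : ℝ)) ^ θ * (2 * t * (1 - r)) ^ (1 - θ)) ^ (-K / 2) :=
      mul_le_mul_of_nonneg_left hstep
        (Real.rpow_nonneg (by nlinarith [hr.1, hr.2] : (0:ℝ) ≤ 1 - r ^ 2) e)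
    refine key.trans_eq ?_
    rw [Real.mul_rpow (Real.rpow_nonneg hx.le _) (Real.rpow_nonneg hy.le _)]
    rw [← Real.rpow_mul (abs_nonneg (1 - t)), ← Real.rpow_mul (abs_nonneg (1 - t)),
      ← Real.rpow_mul hy.le]
    rw [show 2 * θ * (-K / 2) = -(θ * K) by ring]
    rw [show (1 - θ) * (-K / 2) = -μ by rw [hμK]; ring]
    rw [show (2 : ℝ) * t * (1 - r) = (2 * t) * (1 - r) by ring]
    rw [Real.mul_rpow (by linarith : (0:ℝ) ≤ 2 * t) hr1.le]
    rw [show (1 : ℝ) - r ^ 2 = (1 - r) * (1 + r) by ring]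
    rw [Real.mul_rpow hr1.le hr2.le]
    rw [sub_eq_add_neg e μ, Real.rpow_add hr1]
    ring
  have hfmeas : Measurable (fun r : ℝ => (1 - r ^ 2) ^ e * (1 - 2 * t * r + t ^ 2) ^ (-K / 2)) :=
    ((measurable_const.sub (measurable_id.pow_const 2)).pow_const e).mul
      (((measurable_const.sub ((measurable_id.const_mul _))).add measurable_const).pow_const _)
  have hMg : IntegrableOn
      (fun r : ℝ => (|1 - t| ^ (-(θ * K)) * (2 * t) ^ (-μ)) * ((1 - r) ^ (e - μ) * (1 + r) ^ e))
      (Ioo (-1 : ℝ) 1) := hg0.const_mul _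
  have hfint : IntegrableOn (fun r : ℝ => (1 - r ^ 2) ^ e * (1 - 2 * t * r + t ^ 2) ^ (-K / 2))
      (Ioo (-1 : ℝ) 1) := by
    refine hMg.mono' hfmeas.aestronglyMeasurable ?_
    filter_upwards [ae_restrict_mem measurableSet_Ioo] with r hr
    have h1 : (0:ℝ) ≤ 1 - r ^ 2 := by nlinarith [hr.1, hr.2]
    have h2 : (0:ℝ) ≤ 1 - 2 * t * r + t ^ 2 := by nlinarith [hr.1, hr.2, ht]
    rw [Real.norm_eq_abs, abs_of_nonneg (mul_nonneg (Real.rpow_nonneg h1 _) (Real.rpow_nonneg h2 _))]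
    exact bound r hr
  rw [intervalIntegral.integral_of_le (by norm_num : (-1:ℝ) ≤ 1), integral_Ioc_eq_integral_Ioo,
    ← integral_const_mul]
  refine integral_mono_ae hfint hMg ?_
  filter_upwards [ae_restrict_mem measurableSet_Ioo] with r hr
  exact bound r hr

lemma phi_le {d : ℕ} (hd : 2 ≤ d) {s p θ : ℝ} (hs : 0 < s) (hp : 0 < p)
    (hθ0 : 0 ≤ θ) (hθ1 : θ ≤ 1) (hθd : (1 - θ) * ((d : ℝ) + s * p) < (d : ℝ) - 1) :
    ∃ C : ℝ, 0 ≤ C ∧ ∀ t : ℝ, 0 < t → t ≠ 1 →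
      Phi d s p t ≤ C * |1 - t| ^ (-(θ * ((d : ℝ) + s * p))) *
        t ^ (-((1 - θ) * ((d : ℝ) + s * p) / 2)) := by
  have hd2 : (2 : ℝ) ≤ (d : ℝ) := by exact_mod_cast hd
  have hsp : 0 < s * p := mul_pos hs hp
  have hK : 0 < (d : ℝ) + s * p := by linarith
  have he : -1 < ((d : ℝ) - 3) / 2 := by linarith
  have hμ : 0 ≤ (1 - θ) * ((d : ℝ) + s * p) / 2 := by
    have : 0 ≤ (1 - θ) * ((d : ℝ) + s * p) := mul_nonneg (by linarith) hK.le
    linarith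
  have hc : -1 < ((d : ℝ) - 3) / 2 - (1 - θ) * ((d : ℝ) + s * p) / 2 := by linarith
  have hJ : 0 ≤ ∫ r in Ioo (-1 : ℝ) 1,
      (1 - r) ^ (((d : ℝ) - 3) / 2 - (1 - θ) * ((d : ℝ) + s * p) / 2) *
        (1 + r) ^ (((d : ℝ) - 3) / 2) := by
    refine setIntegral_nonneg measurableSet_Ioo fun r hr => ?_
    exact mul_nonneg (Real.rpow_nonneg (by linarith [hr.2]) _)
      (Real.rpow_nonneg (by linarith [hr.1]) _)
  have hCd : 0 ≤ 2 * Real.pi ^ (((d : ℝ) - 1) / 2) / Real.Gamma (((d : ℝ) - 1) / 2) := by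
    have h1 : (0 : ℝ) < Real.pi ^ (((d : ℝ) - 1) / 2) := Real.rpow_pos_of_pos Real.pi_pos _
    have h2 : (0 : ℝ) < Real.Gamma (((d : ℝ) - 1) / 2) := Real.Gamma_pos_of_pos (by linarith)
    positivity
  refine ⟨(2 * Real.pi ^ (((d : ℝ) - 1) / 2) / Real.Gamma (((d : ℝ) - 1) / 2)) *
      (∫ r in Ioo (-1 : ℝ) 1,
        (1 - r) ^ (((d : ℝ) - 3) / 2 - (1 - θ) * ((d : ℝ) + s * p) / 2) *
          (1 + r) ^ (((d : ℝ) - 3) / 2)) * 2 ^ (-((1 - θ) * ((d : ℝ) + s * p) / 2)),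
    by positivity, fun t ht ht1 => ?_⟩
  have hd1 : d ≠ 1 := by omega
  have hib := inner_bound (t := t) hK he hc hμ rfl hθ0 hθ1 ht ht1
  rw [Phi, if_neg hd1]
  calc (2 * Real.pi ^ (((d : ℝ) - 1) / 2) / Real.Gamma (((d : ℝ) - 1) / 2)) *
        ∫ r in (-1 : ℝ)..1, (1 - r ^ 2) ^ (((d : ℝ) - 3) / 2) *
          (1 - 2 * t * r + t ^ 2) ^ (-((d : ℝ) + s * p) / 2)
      ≤ (2 * Real.pi ^ (((d : ℝ) - 1) / 2) / Real.Gamma (((d : ℝ) - 1) / 2)) *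
        ((|1 - t| ^ (-(θ * ((d : ℝ) + s * p))) *
            (2 * t) ^ (-((1 - θ) * ((d : ℝ) + s * p) / 2))) *
          ∫ r in Ioo (-1 : ℝ) 1,
            (1 - r) ^ (((d : ℝ) - 3) / 2 - (1 - θ) * ((d : ℝ) + s * p) / 2) *
              (1 + r) ^ (((d : ℝ) - 3) / 2)) := mul_le_mul_of_nonneg_left hib hCd
    _ = (2 * Real.pi ^ (((d : ℝ) - 1) / 2) / Real.Gamma (((d : ℝ) - 1) / 2)) *
          (∫ r in Ioo (-1 : ℝ) 1,
            (1 - r) ^ (((d : ℝ) - 3) / 2 - (1 - θ) * ((d : ℝ) + s * p) / 2) *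
              (1 + r) ^ (((d : ℝ) - 3) / 2)) * 2 ^ (-((1 - θ) * ((d : ℝ) + s * p) / 2)) *
          |1 - t| ^ (-(θ * ((d : ℝ) + s * p))) * t ^ (-((1 - θ) * ((d : ℝ) + s * p) / 2)) := by
        rw [Real.mul_rpow (by norm_num : (0:ℝ) ≤ 2) ht.le]
        ring

lemma half_rpow (k : ℝ) : ((1 / 2 : ℝ)) ^ (-k) = 2 ^ k := by
  rw [one_div, Real.inv_rpow (by norm_num : (0:ℝ) ≤ 2), Real.rpow_neg (by norm_num : (0:ℝ) ≤ 2),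
    inv_inv]

lemma phi_one_le {s p : ℝ} (hsp : 0 < s * p) (t : ℝ) (ht : 0 < t) (ht1 : t ≠ 1) :
    Phi 1 s p t ≤ 2 * |1 - t| ^ (-1 - s * p) := by
  have h1t : (0 : ℝ) < |1 - t| := by rw [abs_pos]; exact sub_ne_zero.mpr (Ne.symm ht1)
  have h1 : (1 - t) ^ (-1 - s * p) ≤ |1 - t| ^ (-1 - s * p) :=
    (le_abs_self _).trans (Real.abs_rpow_le_abs_rpow _ _)
  have h2 : (1 + t) ^ (-1 - s * p) ≤ |1 - t| ^ (-1 - s * p) := by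
    refine Real.rpow_le_rpow_of_nonpos h1t ?_ (by linarith)
    rw [abs_le]; constructor <;> nlinarith [abs_nonneg (1 - t)]
  rw [Phi, if_pos rfl]
  linarith

lemma one_sub_rpow_le {δ : ℝ} (hδ : 0 < δ) {u : ℝ} (hu0 : 0 < u) (hu1 : u ≤ 1) :
    1 - u ^ δ ≤ max 1 δ * (1 - u) := by
  rcases le_total δ 1 with h | h
  · have : u ^ (1 : ℝ) ≤ u ^ δ := Real.rpow_le_rpow_of_exponent_ge hu0 hu1 h
    rw [Real.rpow_one] at this
    nlinarith [le_max_left 1 δ]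
  · have hb := one_add_mul_self_le_rpow_one_add (s := u - 1) (by linarith) h
    rw [show (1 : ℝ) + (u - 1) = u by ring] at hb
    nlinarith [le_max_right 1 δ]

lemma abs_one_sub_rpow {δ : ℝ} (hδ : 0 < δ) {t : ℝ} (h1 : 1 / 2 ≤ t) (h2 : t ≤ 2) :
    |1 - t ^ (-δ)| ≤ (2 ^ δ * max 1 δ) * |1 - t| := by
  have ht0 : (0 : ℝ) < t := by linarith
  have h2δ : (1 : ℝ) ≤ 2 ^ δ := Real.one_le_rpow one_le_two hδ.le
  have hmax : (0 : ℝ) ≤ max 1 δ := by positivity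
  rcases le_total t 1 with h | h
  · have hge : (1 : ℝ) ≤ t ^ (-δ) :=
      Real.one_le_rpow_of_pos_of_le_one_of_nonpos ht0 h (by linarith)
    have hprod : t ^ δ * t ^ (-δ) = 1 := by
      rw [← Real.rpow_add ht0]; simp
    have habs : |1 - t ^ (-δ)| = t ^ (-δ) - 1 := by
      rw [abs_of_nonpos (by linarith)]; ring
    have hid : t ^ (-δ) - 1 = (1 - t ^ δ) * t ^ (-δ) := by
      rw [sub_mul, one_mul, hprod]
    have hb1 : 1 - t ^ δ ≤ max 1 δ * (1 - t) := one_sub_rpow_le hδ ht0 h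
    have hb1' : 0 ≤ 1 - t ^ δ := by
      have := Real.rpow_le_one ht0.le h hδ.le; linarith
    have hb2 : t ^ (-δ) ≤ 2 ^ δ := by
      have := Real.rpow_le_rpow_of_nonpos (by norm_num : (0:ℝ) < 1/2) h1
        (by linarith : -δ ≤ 0)
      rwa [half_rpow] at this
    have habs2 : |1 - t| = 1 - t := abs_of_nonneg (by linarith)
    rw [habs, hid, habs2]
    calc (1 - t ^ δ) * t ^ (-δ) ≤ (max 1 δ * (1 - t)) * 2 ^ δ := by
          apply mul_le_mul hb1 hb2 (by positivity) (by nlinarith)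
      _ = 2 ^ δ * max 1 δ * (1 - t) := by ring
  · have hle : t ^ (-δ) ≤ 1 := Real.rpow_le_one_of_one_le_of_nonpos h (by linarith)
    have habs : |1 - t ^ (-δ)| = 1 - t ^ (-δ) := abs_of_nonneg (by linarith)
    have hinv : t ^ (-δ) = (t⁻¹) ^ δ := by
      rw [Real.inv_rpow ht0.le, ← Real.rpow_neg ht0.le]
    have hu0 : (0 : ℝ) < t⁻¹ := by positivity
    have hu1 : t⁻¹ ≤ 1 := by
      rw [inv_le_one_iff₀]; right; linarith
    have hb1 : 1 - (t⁻¹) ^ δ ≤ max 1 δ * (1 - t⁻¹) := one_sub_rpow_le hδ hu0 hu1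
    have h3 : 1 - t⁻¹ ≤ t - 1 := by
      have ht' : t * t⁻¹ = 1 := mul_inv_cancel₀ (ne_of_gt ht0)
      nlinarith [sq_nonneg (t - 1)]
    have habs2 : |1 - t| = t - 1 := by rw [abs_sub_comm, abs_of_nonneg (by linarith)]
    rw [habs, hinv, habs2]
    have : max 1 δ * (1 - t⁻¹) ≤ max 1 δ * (t - 1) := by
      apply mul_le_mul_of_nonneg_left h3 hmax
    nlinarith [mul_nonneg hmax (by linarith : (0:ℝ) ≤ t - 1)]

lemma rpow_le_two_rpow_abs {t a : ℝ} (h1 : 1 / 2 ≤ t) (h2 : t ≤ 2) : t ^ a ≤ 2 ^ |a| := by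
  have ht0 : (0 : ℝ) < t := by linarith
  rcases le_or_gt 0 a with h | h
  · calc t ^ a ≤ 2 ^ a := Real.rpow_le_rpow ht0.le h2 h
      _ ≤ 2 ^ |a| := Real.rpow_le_rpow_of_exponent_le one_le_two (le_abs_self a)
  · calc t ^ a ≤ (1/2 : ℝ) ^ a := Real.rpow_le_rpow_of_nonpos (by norm_num) h1 h.le
      _ = 2 ^ (-a) := by rw [← half_rpow (-a), neg_neg]
      _ = 2 ^ |a| := by rw [abs_of_neg h]

lemma lint_piece {S : Set ℝ} (hS : MeasurableSet S) {F G : ℝ → ℝ}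
    (hb : ∀ t ∈ S, F t ≤ G t) (hG : IntegrableOn G S) :
    ∫⁻ t in S, ENNReal.ofReal (F t) < ⊤ := by
  calc ∫⁻ t in S, ENNReal.ofReal (F t) ≤ ∫⁻ t in S, ENNReal.ofReal (G t) := by
        refine lintegral_mono_ae ?_
        filter_upwards [ae_restrict_mem hS] with t ht
        exact ENNReal.ofReal_le_ofReal (hb t ht)
    _ < ⊤ := hG.setLIntegral_lt_top

lemma regionA {d : ℕ} {s p δ β Cb k m : ℝ} (hp : 0 < p) (hδ : 0 < δ)
    (hCb : 0 ≤ Cb) (hk : 0 ≤ k) (hm : 0 ≤ m)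
    (hlt : p * δ + m < (d : ℝ) + β)
    (hPhi : ∀ t : ℝ, 0 < t → t ≠ 1 → Phi d s p t ≤ Cb * |1 - t| ^ (-k) * t ^ (-m)) :
    ∫⁻ t in Ioc (0 : ℝ) (1/2),
      ENNReal.ofReal (|1 - t ^ (-δ)| ^ p * t ^ ((d : ℝ) + β - 1) * Phi d s p t) < ⊤ := by
  refine lint_piece measurableSet_Ioc (G := fun t => (2 ^ p * (Cb * 2 ^ k)) *
    t ^ ((d : ℝ) + β - 1 - δ * p - m)) (fun t ht => ?_) ?_
  · obtain ⟨ht0, hth⟩ := ht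
    have ht1 : t ≠ 1 := by intro h; rw [h] at hth; norm_num at hth
    have hge : (1 : ℝ) ≤ t ^ (-δ) :=
      Real.one_le_rpow_of_pos_of_le_one_of_nonpos ht0 (by linarith) (by linarith)
    have h1 : |1 - t ^ (-δ)| ≤ 2 * t ^ (-δ) := by
      rw [abs_of_nonpos (by linarith)]; linarith
    have h2 : |1 - t ^ (-δ)| ^ p ≤ 2 ^ p * t ^ (-δ * p) := by
      calc |1 - t ^ (-δ)| ^ p ≤ (2 * t ^ (-δ)) ^ p :=
            Real.rpow_le_rpow (abs_nonneg _) h1 hp.le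
        _ = 2 ^ p * t ^ (-δ * p) := by
            rw [Real.mul_rpow (by norm_num) (Real.rpow_nonneg ht0.le _),
              ← Real.rpow_mul ht0.le]
    have habsk : |1 - t| ^ (-k) ≤ 2 ^ k := by
      have harg : (1/2 : ℝ) ≤ |1 - t| := by
        rw [abs_of_nonneg (by linarith : (0:ℝ) ≤ 1 - t)]; linarith
      have := Real.rpow_le_rpow_of_nonpos (by norm_num : (0:ℝ) < 1/2) harg (by linarith : -k ≤ 0)
      rwa [half_rpow] at this
    have hPhi2 : Phi d s p t ≤ Cb * 2 ^ k * t ^ (-m) := by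
      refine (hPhi t ht0 ht1).trans ?_
      exact mul_le_mul_of_nonneg_right (mul_le_mul_of_nonneg_left habsk hCb)
        (Real.rpow_nonneg ht0.le _)
    have hAW : 0 ≤ |1 - t ^ (-δ)| ^ p * t ^ ((d : ℝ) + β - 1) :=
      mul_nonneg (Real.rpow_nonneg (abs_nonneg _) _) (Real.rpow_nonneg ht0.le _)
    calc |1 - t ^ (-δ)| ^ p * t ^ ((d : ℝ) + β - 1) * Phi d s p t
        ≤ |1 - t ^ (-δ)| ^ p * t ^ ((d : ℝ) + β - 1) * (Cb * 2 ^ k * t ^ (-m)) :=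
          mul_le_mul_of_nonneg_left hPhi2 hAW
      _ ≤ (2 ^ p * t ^ (-δ * p)) * t ^ ((d : ℝ) + β - 1) * (Cb * 2 ^ k * t ^ (-m)) := by
          refine mul_le_mul_of_nonneg_right (mul_le_mul_of_nonneg_right h2
            (Real.rpow_nonneg ht0.le _)) ?_
          positivity
      _ = (2 ^ p * (Cb * 2 ^ k)) * t ^ ((d : ℝ) + β - 1 - δ * p - m) := by
          rw [show (d : ℝ) + β - 1 - δ * p - m = -δ * p + ((d : ℝ) + β - 1) + -m by ring,
            Real.rpow_add ht0, Real.rpow_add ht0]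
          ring
  · refine Integrable.const_mul ?_ _
    have : IntervalIntegrable (fun t : ℝ => t ^ ((d : ℝ) + β - 1 - δ * p - m)) volume 0 (1/2) :=
      intervalIntegral.intervalIntegrable_rpow' (by linarith)
    exact (intervalIntegrable_iff_integrableOn_Ioc_of_le (by norm_num)).mp this

lemma regionC {d : ℕ} {s p δ β Cb k m : ℝ} (hp : 0 < p) (hδ : 0 < δ)
    (hCb : 0 ≤ Cb) (hk : 0 ≤ k) (hm : 0 ≤ m)
    (hlt : (d : ℝ) + β - 1 - k < -1)
    (hPhi : ∀ t : ℝ, 0 < t → t ≠ 1 → Phi d s p t ≤ Cb * |1 - t| ^ (-k) * t ^ (-m)) :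
    ∫⁻ t in Ioi (2 : ℝ),
      ENNReal.ofReal (|1 - t ^ (-δ)| ^ p * t ^ ((d : ℝ) + β - 1) * Phi d s p t) < ⊤ := by
  refine lint_piece measurableSet_Ioi (G := fun t => (Cb * 2 ^ k) *
    t ^ ((d : ℝ) + β - 1 - k)) (fun t ht => ?_) ?_
  · have ht2 : (2 : ℝ) < t := ht
    have ht0 : (0 : ℝ) < t := by linarith
    have ht1 : t ≠ 1 := by intro h; rw [h] at ht2; norm_num at ht2
    have htd0 : 0 < t ^ (-δ) := Real.rpow_pos_of_pos ht0 _
    have htd1 : t ^ (-δ) ≤ 1 := Real.rpow_le_one_of_one_le_of_nonpos (by linarith) (by linarith)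
    have hA : |1 - t ^ (-δ)| ^ p ≤ 1 :=
      Real.rpow_le_one (abs_nonneg _) (by rw [abs_le]; constructor <;> linarith) hp.le
    have hB : |1 - t| ^ (-k) ≤ 2 ^ k * t ^ (-k) := by
      have h1 : t / 2 ≤ |1 - t| := by
        rw [abs_sub_comm, abs_of_nonneg (by linarith : (0:ℝ) ≤ t - 1)]; linarith
      have h2 : |1 - t| ^ (-k) ≤ (t / 2) ^ (-k) :=
        Real.rpow_le_rpow_of_nonpos (by linarith) h1 (by linarith)
      refine h2.trans_eq ?_
      rw [show t / 2 = t * (1/2 : ℝ) by ring, Real.mul_rpow ht0.le (by norm_num),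
        half_rpow]
      ring
    have hm' : t ^ (-m) ≤ 1 := Real.rpow_le_one_of_one_le_of_nonpos (by linarith) (by linarith)
    have hPhi2 : Phi d s p t ≤ (Cb * 2 ^ k) * t ^ (-k) := by
      refine (hPhi t ht0 ht1).trans ?_
      calc Cb * |1 - t| ^ (-k) * t ^ (-m) ≤ Cb * |1 - t| ^ (-k) * 1 := by
            refine mul_le_mul_of_nonneg_left hm' ?_
            exact mul_nonneg hCb (Real.rpow_nonneg (abs_nonneg _) _)
        _ = Cb * |1 - t| ^ (-k) := by ring
        _ ≤ Cb * (2 ^ k * t ^ (-k)) := mul_le_mul_of_nonneg_left hB hCb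
        _ = (Cb * 2 ^ k) * t ^ (-k) := by ring
    have hAW : 0 ≤ |1 - t ^ (-δ)| ^ p * t ^ ((d : ℝ) + β - 1) :=
      mul_nonneg (Real.rpow_nonneg (abs_nonneg _) _) (Real.rpow_nonneg ht0.le _)
    calc |1 - t ^ (-δ)| ^ p * t ^ ((d : ℝ) + β - 1) * Phi d s p t
        ≤ |1 - t ^ (-δ)| ^ p * t ^ ((d : ℝ) + β - 1) * ((Cb * 2 ^ k) * t ^ (-k)) :=
          mul_le_mul_of_nonneg_left hPhi2 hAW
      _ ≤ 1 * t ^ ((d : ℝ) + β - 1) * ((Cb * 2 ^ k) * t ^ (-k)) := by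
          refine mul_le_mul_of_nonneg_right (mul_le_mul_of_nonneg_right hA
            (Real.rpow_nonneg ht0.le _)) ?_
          positivity
      _ = (Cb * 2 ^ k) * t ^ ((d : ℝ) + β - 1 - k) := by
          rw [show (d : ℝ) + β - 1 - k = ((d : ℝ) + β - 1) + -k by ring, Real.rpow_add ht0]
          ring
  · exact (integrableOn_Ioi_rpow_of_lt hlt (by norm_num : (0:ℝ) < 2)).const_mul _

lemma regionM {d : ℕ} {s p δ β Cb k m : ℝ} (hp : 0 < p) (hδ : 0 < δ)
    (hCb : 0 ≤ Cb) (hk : 0 ≤ k) (hm : 0 ≤ m)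
    (hlt : -1 < p - k)
    (hPhi : ∀ t : ℝ, 0 < t → t ≠ 1 → Phi d s p t ≤ Cb * |1 - t| ^ (-k) * t ^ (-m)) :
    ∫⁻ t in Ioc (1/2 : ℝ) 2,
      ENNReal.ofReal (|1 - t ^ (-δ)| ^ p * t ^ ((d : ℝ) + β - 1) * Phi d s p t) < ⊤ := by
  set L : ℝ := 2 ^ δ * max 1 δ with hLdef
  have hL : 0 ≤ L := by positivity
  set CM : ℝ := L ^ p * 2 ^ |(d : ℝ) + β - 1| * (Cb * 2 ^ m) with hCMdef
  have hCM : 0 ≤ CM := by positivity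
  refine lint_piece measurableSet_Ioc (G := fun t => CM * |1 - t| ^ (p - k))
    (fun t ht => ?_) ?_
  · obtain ⟨hth, ht2⟩ := ht
    have ht0 : (0 : ℝ) < t := by linarith
    by_cases ht1 : t = 1
    · subst ht1
      rw [show (1:ℝ) - (1:ℝ) ^ (-δ) = 0 by rw [Real.one_rpow]; ring, abs_zero,
        Real.zero_rpow (ne_of_gt hp), zero_mul, zero_mul]
      positivity
    · have h1t : (0 : ℝ) < |1 - t| := by rw [abs_pos]; exact sub_ne_zero.mpr (Ne.symm ht1)
      have hA : |1 - t ^ (-δ)| ^ p ≤ L ^ p * |1 - t| ^ p := by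
        calc |1 - t ^ (-δ)| ^ p ≤ (L * |1 - t|) ^ p :=
              Real.rpow_le_rpow (abs_nonneg _) (abs_one_sub_rpow hδ hth.le ht2) hp.le
          _ = L ^ p * |1 - t| ^ p := Real.mul_rpow hL (abs_nonneg _)
      have hW : t ^ ((d : ℝ) + β - 1) ≤ 2 ^ |(d : ℝ) + β - 1| :=
        rpow_le_two_rpow_abs hth.le ht2
      have hm' : t ^ (-m) ≤ 2 ^ m := by
        have := Real.rpow_le_rpow_of_nonpos (by norm_num : (0:ℝ) < 1/2) hth.le
          (by linarith : -m ≤ 0)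
        rwa [half_rpow] at this
      have hPhi2 : Phi d s p t ≤ (Cb * 2 ^ m) * |1 - t| ^ (-k) := by
        refine (hPhi t ht0 ht1).trans ?_
        calc Cb * |1 - t| ^ (-k) * t ^ (-m) ≤ Cb * |1 - t| ^ (-k) * 2 ^ m := by
              refine mul_le_mul_of_nonneg_left hm' ?_
              exact mul_nonneg hCb (Real.rpow_nonneg (abs_nonneg _) _)
          _ = (Cb * 2 ^ m) * |1 - t| ^ (-k) := by ring
      have hAW : 0 ≤ |1 - t ^ (-δ)| ^ p * t ^ ((d : ℝ) + β - 1) :=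
        mul_nonneg (Real.rpow_nonneg (abs_nonneg _) _) (Real.rpow_nonneg ht0.le _)
      calc |1 - t ^ (-δ)| ^ p * t ^ ((d : ℝ) + β - 1) * Phi d s p t
          ≤ |1 - t ^ (-δ)| ^ p * t ^ ((d : ℝ) + β - 1) * ((Cb * 2 ^ m) * |1 - t| ^ (-k)) :=
            mul_le_mul_of_nonneg_left hPhi2 hAW
        _ ≤ (L ^ p * |1 - t| ^ p) * 2 ^ |(d : ℝ) + β - 1| * ((Cb * 2 ^ m) * |1 - t| ^ (-k)) := by
            have hPB : 0 ≤ (Cb * 2 ^ m) * |1 - t| ^ (-k) := by positivity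
            refine mul_le_mul_of_nonneg_right ?_ hPB
            refine mul_le_mul hA hW (Real.rpow_nonneg ht0.le _) (by positivity)
        _ = CM * |1 - t| ^ (p - k) := by
            rw [hCMdef, show p - k = p + -k by ring, Real.rpow_add h1t]
            ring
  · refine Integrable.const_mul ?_ _
    have base1 : IntervalIntegrable (fun x : ℝ => x ^ (p - k)) volume 0 (1/2) :=
      intervalIntegral.intervalIntegrable_rpow' hlt
    have base2 : IntervalIntegrable (fun x : ℝ => x ^ (p - k)) volume 0 1 :=
      intervalIntegral.intervalIntegrable_rpow' hlt
    have i1 : IntervalIntegrable (fun x : ℝ => (1 - x) ^ (p - k)) volume (1/2) 1 := by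
      have := (base1.comp_sub_left 1).symm
      norm_num at this
      exact this
    have i2 : IntervalIntegrable (fun x : ℝ => (x - 1) ^ (p - k)) volume 1 2 := by
      have := base2.comp_sub_right 1
      norm_num at this
      exact this
    have p1 : IntegrableOn (fun t : ℝ => |1 - t| ^ (p - k)) (Ioc (1/2 : ℝ) 1) := by
      refine IntegrableOn.congr_fun (f := fun t : ℝ => (1 - t) ^ (p - k)) ?_
        (fun t ht => ?_) measurableSet_Ioc
      · exact (intervalIntegrable_iff_integrableOn_Ioc_of_le (by norm_num)).mp i1
      · rw [abs_of_nonneg (by linarith [ht.2] : (0:ℝ) ≤ 1 - t)]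
    have p2 : IntegrableOn (fun t : ℝ => |1 - t| ^ (p - k)) (Ioc (1 : ℝ) 2) := by
      refine IntegrableOn.congr_fun (f := fun t : ℝ => (t - 1) ^ (p - k)) ?_
        (fun t ht => ?_) measurableSet_Ioc
      · exact (intervalIntegrable_iff_integrableOn_Ioc_of_le (by norm_num)).mp i2
      · rw [abs_sub_comm, abs_of_nonneg (by linarith [ht.1] : (0:ℝ) ≤ t - 1)]
    have := p1.union p2
    rwa [Ioc_union_Ioc_eq_Ioc (by norm_num : (1/2:ℝ) ≤ 1) (by norm_num : (1:ℝ) ≤ 2)] at this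

theorem sharp_constant_integral_finite (d : ℕ) (hd : 1 ≤ d) (s p q δ β : ℝ)
    (hs : 0 < s) (hs1 : s < 1) (hq : 1 ≤ q) (hpq : q ≤ p) (hδ : 0 < δ)
    (hβ : -(d : ℝ) < β) (hβ2 : β < s * p) (hδ2 : p * δ < (d : ℝ) + β) :
    (∫⁻ t in Ioi (0 : ℝ),
        ENNReal.ofReal (|1 - t ^ (-δ)| ^ p * t ^ ((d : ℝ) + β - 1) * Phi d s p t)) < ⊤ := by
  have hp1 : 1 ≤ p := hq.trans hpq
  have hp : 0 < p := by linarith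
  have hsp : 0 < s * p := mul_pos hs hp
  -- reduce to the three regions
  have hsplit : Ioi (0 : ℝ) ⊆ (Ioc (0 : ℝ) (1/2) ∪ Ioc (1/2 : ℝ) 2) ∪ Ioi (2 : ℝ) := by
    intro x hx
    rcases le_or_gt x (1/2) with h | h
    · exact Or.inl (Or.inl ⟨hx, h⟩)
    · rcases le_or_gt x 2 with h2 | h2
      · exact Or.inl (Or.inr ⟨h, h2⟩)
      · exact Or.inr h2
  set F : ℝ → ℝ≥0∞ := fun t =>
    ENNReal.ofReal (|1 - t ^ (-δ)| ^ p * t ^ ((d : ℝ) + β - 1) * Phi d s p t) with hF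
  have hmain : ∀ kA mA kM mM kC mC CA CM' CC : ℝ,
      0 ≤ CA → 0 ≤ CM' → 0 ≤ CC → 0 ≤ kA → 0 ≤ mA → 0 ≤ kM → 0 ≤ mM → 0 ≤ kC → 0 ≤ mC →
      p * δ + mA < (d : ℝ) + β → -1 < p - kM → (d : ℝ) + β - 1 - kC < -1 →
      (∀ t : ℝ, 0 < t → t ≠ 1 → Phi d s p t ≤ CA * |1 - t| ^ (-kA) * t ^ (-mA)) →
      (∀ t : ℝ, 0 < t → t ≠ 1 → Phi d s p t ≤ CM' * |1 - t| ^ (-kM) * t ^ (-mM)) →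
      (∀ t : ℝ, 0 < t → t ≠ 1 → Phi d s p t ≤ CC * |1 - t| ^ (-kC) * t ^ (-mC)) →
      (∫⁻ t in Ioi (0 : ℝ), F t) < ⊤ := by
    intro kA mA kM mM kC mC CA CM' CC hCA hCM hCC hkA hmA hkM hmM hkC hmC hA hM hC bA bM bC
    calc (∫⁻ t in Ioi (0 : ℝ), F t)
        ≤ ∫⁻ t in (Ioc (0 : ℝ) (1/2) ∪ Ioc (1/2 : ℝ) 2) ∪ Ioi (2 : ℝ), F t :=
          lintegral_mono_set hsplit
      _ ≤ (∫⁻ t in Ioc (0 : ℝ) (1/2) ∪ Ioc (1/2 : ℝ) 2, F t) + ∫⁻ t in Ioi (2 : ℝ), F t :=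
          lintegral_union_le _ _ _
      _ ≤ ((∫⁻ t in Ioc (0 : ℝ) (1/2), F t) + ∫⁻ t in Ioc (1/2 : ℝ) 2, F t)
            + ∫⁻ t in Ioi (2 : ℝ), F t := by
          gcongr
          exact lintegral_union_le _ _ _
      _ < ⊤ := by
          have r1 := regionA (β := β) hp hδ hCA hkA hmA hA bA
          have r2 := regionM (β := β) hp hδ hCM hkM hmM hM bM
          have r3 := regionC (β := β) hp hδ hCC hkC hmC hC bC
          rw [hF]
          exact ENNReal.add_lt_top.mpr ⟨ENNReal.add_lt_top.mpr ⟨r1, r2⟩, r3⟩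
  by_cases hd1 : d = 1
  · subst hd1
    have hbnd : ∀ t : ℝ, 0 < t → t ≠ 1 →
        Phi 1 s p t ≤ 2 * |1 - t| ^ (-(1 + s * p)) * t ^ (-(0:ℝ)) := by
      intro t ht ht1
      rw [neg_zero, Real.rpow_zero, mul_one, show -(1 + s * p) = -1 - s * p by ring]
      exact phi_one_le hsp t ht ht1
    refine hmain (1 + s*p) 0 (1 + s*p) 0 (1 + s*p) 0 2 2 2
      (by norm_num) (by norm_num) (by norm_num)
      (by linarith) le_rfl (by linarith) le_rfl (by linarith) le_rfl
      (by push_cast at hδ2 ⊢; linarith) (by nlinarith) (by push_cast; linarith)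
      hbnd hbnd hbnd
  · have hd2 : 2 ≤ d := by omega
    have hd2' : (2 : ℝ) ≤ (d : ℝ) := by exact_mod_cast hd2
    have hK : 0 < (d : ℝ) + s * p := by linarith
    have hKne : (d : ℝ) + s * p ≠ 0 := ne_of_gt hK
    obtain ⟨θA, hθA0, hθA1, hθAd, hmA_lt⟩ :
        ∃ θ : ℝ, 0 ≤ θ ∧ θ ≤ 1 ∧ (1 - θ) * ((d : ℝ) + s * p) < (d : ℝ) - 1 ∧
          p * δ + (1 - θ) * ((d : ℝ) + s * p) / 2 < (d : ℝ) + β := by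
      have h1 : 0 < (1 + s * p) / ((d : ℝ) + s * p) := div_pos (by linarith) hK
      have h1' : (1 + s * p) / ((d : ℝ) + s * p) < 1 := by rw [div_lt_one hK]; linarith
      have h2' : 1 - 2 * ((d : ℝ) + β - p * δ) / ((d : ℝ) + s * p) < 1 := by
        have : 0 < 2 * ((d : ℝ) + β - p * δ) / ((d : ℝ) + s * p) :=
          div_pos (by linarith) hK
        linarith
      have e1 : (1 + s * p) / ((d : ℝ) + s * p) * ((d : ℝ) + s * p) = 1 + s * p :=
        div_mul_cancel₀ _ hKne
      have e2 : (1 - 2 * ((d : ℝ) + β - p * δ) / ((d : ℝ) + s * p)) * ((d : ℝ) + s * p)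
          = ((d : ℝ) + s * p) - 2 * ((d : ℝ) + β - p * δ) := by
        field_simp
      obtain ⟨θ, hgt, hlt1⟩ := exists_between (max_lt h1' h2')
      have hgt1 : (1 + s * p) / ((d : ℝ) + s * p) < θ :=
        lt_of_le_of_lt (le_max_left _ _) hgt
      have hgt2 : 1 - 2 * ((d : ℝ) + β - p * δ) / ((d : ℝ) + s * p) < θ :=
        lt_of_le_of_lt (le_max_right _ _) hgt
      refine ⟨θ, by linarith, by linarith, ?_, ?_⟩
      · have h4 := mul_lt_mul_of_pos_right hgt1 hK
        rw [e1] at h4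
        have h5 : (1 - θ) * ((d : ℝ) + s * p) = ((d : ℝ) + s * p) - θ * ((d : ℝ) + s * p) := by
          ring
        linarith
      · have h4 := mul_lt_mul_of_pos_right hgt2 hK
        rw [e2] at h4
        have h5 : (1 - θ) * ((d : ℝ) + s * p) = ((d : ℝ) + s * p) - θ * ((d : ℝ) + s * p) := by
          ring
        linarith
    obtain ⟨θM, hθM0, hθM1, hθMd, hkM_lt⟩ :
        ∃ θ : ℝ, 0 ≤ θ ∧ θ ≤ 1 ∧ (1 - θ) * ((d : ℝ) + s * p) < (d : ℝ) - 1 ∧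
          -1 < p - θ * ((d : ℝ) + s * p) := by
      have h1 : 0 < (1 + s * p) / ((d : ℝ) + s * p) := div_pos (by linarith) hK
      have hmin1 : (1 + s * p) / ((d : ℝ) + s * p) < min ((1 + p) / ((d : ℝ) + s * p)) 1 := by
        refine lt_min ?_ ?_
        · exact (div_lt_div_iff_of_pos_right hK).mpr (by nlinarith)
        · rw [div_lt_one hK]; linarith
      have e1 : (1 + s * p) / ((d : ℝ) + s * p) * ((d : ℝ) + s * p) = 1 + s * p :=
        div_mul_cancel₀ _ hKne
      have e3 : (1 + p) / ((d : ℝ) + s * p) * ((d : ℝ) + s * p) = 1 + p :=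
        div_mul_cancel₀ _ hKne
      obtain ⟨θ, hgt, hlt1⟩ := exists_between hmin1
      have hltp : θ < (1 + p) / ((d : ℝ) + s * p) :=
        lt_of_lt_of_le hlt1 (min_le_left _ _)
      have hlt2 : θ < 1 := lt_of_lt_of_le hlt1 (min_le_right _ _)
      refine ⟨θ, by linarith, by linarith, ?_, ?_⟩
      · have h4 := mul_lt_mul_of_pos_right hgt hK
        rw [e1] at h4
        have h5 : (1 - θ) * ((d : ℝ) + s * p) = ((d : ℝ) + s * p) - θ * ((d : ℝ) + s * p) := by
          ring
        linarith
      · have h4 := mul_lt_mul_of_pos_right hltp hK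
        rw [e3] at h4
        linarith
    obtain ⟨CA, hCA, bA⟩ := phi_le hd2 hs hp hθA0 hθA1 hθAd
    obtain ⟨CM', hCM', bM⟩ := phi_le hd2 hs hp hθM0 hθM1 hθMd
    obtain ⟨CC, hCC, bC⟩ := phi_le (θ := 1) hd2 hs hp zero_le_one le_rfl
      (by rw [sub_self, zero_mul]; linarith)
    refine hmain (θA * ((d : ℝ) + s * p)) ((1 - θA) * ((d : ℝ) + s * p) / 2)
      (θM * ((d : ℝ) + s * p)) ((1 - θM) * ((d : ℝ) + s * p) / 2)
      (1 * ((d : ℝ) + s * p)) ((1 - 1) * ((d : ℝ) + s * p) / 2)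
      CA CM' CC hCA hCM' hCC
      (mul_nonneg hθA0 hK.le)
      (by have := mul_nonneg (show (0:ℝ) ≤ 1 - θA by linarith) hK.le; linarith)
      (mul_nonneg hθM0 hK.le)
      (by have := mul_nonneg (show (0:ℝ) ≤ 1 - θM by linarith) hK.le; linarith)
      (by rw [one_mul]; exact hK.le)
      (by norm_num)
      hmA_lt hkM_lt (by rw [one_mul]; linarith)
      (fun t ht ht1 => bA t ht ht1)
      (fun t ht ht1 => bM t ht ht1)
      (fun t ht ht1 => bC t ht ht1)
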